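/- arXiv:2408.09135 — 3 statements merged into one kernel-verified Lean document; each statement's English description precedes it below -/
import Mathlib

section
/- Let v : Fin k → ℝ with v i ≠ 0 for all i, and for each index i define T i = ReLU(v i) and B i = ReLU(-v i). Suppose a leaf is described by a function c : Fin k → Bool ⊕ Unit, where for i in its root path c i specifies the required sign of v i, and its output value is the total sum ∑ (T j + B j) minus the terms excluded by wrong-sign requirements. If some required decision is violated (i.e., c i demands v i > 0 but v i < 0, or vice versa), then the leaf's output value is strictly less than ∑ i (T i + B i). -/
noncomputable def ReLU (x : ℝ) : ℝ := max x 0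

/-- If a leaf (described by sign requirements `c`, where `Sum.inl true` demands
`v i > 0`, `Sum.inl false` demands `v i < 0`, and `Sum.inr ()` imposes nothing)
violates some required decision, then its output value is strictly less than
`∑ i, (T i + B i)` where `T i = ReLU (v i)`, `B i = ReLU (-v i)`. -/
theorem violated_leaf_lt (k : ℕ) (v : Fin k → ℝ) (hv : ∀ i, v i ≠ 0)
    (c : Fin k → Bool ⊕ Unit)
    (hviol : ∃ i, (c i = Sum.inl true ∧ v i < 0) ∨ (c i = Sum.inl false ∧ 0 < v i)) :
    (∑ i, Sum.elim (fun b => if b then ReLU (v i) else ReLU (-v i))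
        (fun _ => ReLU (v i) + ReLU (-v i)) (c i))
      < ∑ i, (ReLU (v i) + ReLU (-v i)) := by
  obtain ⟨i, hi⟩ := hviol
  apply Finset.sum_lt_sum
  · intro j _
    have h1 : 0 ≤ ReLU (v j) := le_max_right _ _
    have h2 : 0 ≤ ReLU (-v j) := le_max_right _ _
    rcases c j with b | u
    · cases b <;> simp <;> linarith
    · simp
  · refine ⟨i, Finset.mem_univ i, ?_⟩
    rcases hi with ⟨hc, hlt⟩ | ⟨hc, hlt⟩ <;> rw [hc] <;> simp [ReLU]
    · rw [abs_of_neg hlt]; constructor <;> linarith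
    · rw [abs_of_pos hlt]; constructor <;> linarith
end

section
/- Let v : Fin k → ℝ with v i ≠ 0 for all i, and let leaves ℓ of a full binary tree over internal nodes Fin k have DTSemNet output values val(ℓ) = ∑_{i ∉ path(ℓ)} (ReLU(v i) + ReLU(-v i)) + ∑_{i ∈ path(ℓ)} ReLU(ε_ℓ(i) · v i), where ε_ℓ(i) = +1 if ℓ is a right descendant of i and −1 if a left descendant. Then the unique leaf ℓ⋆ whose required signs all agree with the signs of v satisfies val(ℓ⋆) > val(ℓ') for every other leaf ℓ'. Consequently argmax over leaves of val equals the leaf selected by the hard decision tree. -/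
open Finset

lemma ReLU_eq_zero_of_nonpos {x : ℝ} (hx : x ≤ 0) : ReLU x = 0 := max_eq_right hx

lemma ReLU_le_abs (x : ℝ) : ReLU x ≤ |x| := max_le (le_abs_self x) (abs_nonneg x)

lemma ReLU_add_ReLU_neg (x : ℝ) : ReLU x + ReLU (-x) = |x| := by
  rcases le_total 0 x with hx | hx
  · rw [ReLU_eq_zero_of_nonpos (neg_nonpos.mpr hx), ReLU, max_eq_left hx, abs_of_nonneg hx,
      add_zero]
  · rw [ReLU_eq_zero_of_nonpos hx, ReLU, max_eq_left (neg_nonneg.mpr hx), abs_of_nonpos hx,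
      zero_add]

lemma ReLU_mul_le_abs {ε : ℝ} (hε : |ε| ≤ 1) (x : ℝ) : ReLU (ε * x) ≤ |x| :=
  calc ReLU (ε * x) ≤ |ε| * |x| := abs_mul ε x ▸ ReLU_le_abs _
    _ ≤ |x| := mul_le_of_le_one_left (abs_nonneg x) hε

lemma ReLU_mul_eq_abs_of_pos {ε x : ℝ} (hε : |ε| = 1) (h : 0 < ε * x) : ReLU (ε * x) = |x| :=
  calc ReLU (ε * x) = |ε * x| := by rw [ReLU, max_eq_left h.le, abs_of_pos h]
    _ = |x| := by rw [abs_mul, hε, one_mul]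

section LeafValue

variable {ι : Type*} [Fintype ι] [DecidableEq ι] (v : ι → ℝ) (s : Finset ι) (ε : ι → ℝ)

noncomputable def leafValue : ℝ :=
  ∑ i ∈ sᶜ, (ReLU (v i) + ReLU (-v i)) + ∑ i ∈ s, ReLU (ε i * v i)

lemma leafValue_eq : leafValue v s ε = ∑ i ∈ sᶜ, |v i| + ∑ i ∈ s, ReLU (ε i * v i) := by
  simp only [leafValue, ReLU_add_ReLU_neg]

variable {v s ε}

lemma leafValue_eq_sum_abs_of_agree (hε : ∀ i ∈ s, |ε i| = 1)
    (hagree : ∀ i ∈ s, 0 < ε i * v i) : leafValue v s ε = ∑ i, |v i| := by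
  rw [leafValue_eq, sum_congr rfl fun i hi => ReLU_mul_eq_abs_of_pos (hε i hi) (hagree i hi),
    sum_compl_add_sum]

lemma leafValue_lt_sum_abs_of_disagree (hε : ∀ i ∈ s, |ε i| ≤ 1) {j : ι} (hj : j ∈ s)
    (hvj : v j ≠ 0) (hdis : ε j * v j ≤ 0) : leafValue v s ε < ∑ i, |v i| := by
  have hpath : ∑ i ∈ s, ReLU (ε i * v i) < ∑ i ∈ s, |v i| :=
    sum_lt_sum (fun i hi => ReLU_mul_le_abs (hε i hi) (v i))
      ⟨j, hj, (ReLU_eq_zero_of_nonpos hdis).trans_lt (abs_pos.mpr hvj)⟩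
  rw [leafValue_eq, ← sum_compl_add_sum s]
  exact (add_lt_add_iff_left _).mpr hpath

end LeafValue

open Finset in
/-- Theorem 1 (semantic equivalence): the unique leaf all of whose required
signs agree with the signs of `v` has a strictly larger DTSemNet output value
than every other leaf; hence the argmax over leaves equals the leaf selected by
the hard decision tree. -/
theorem dtsemnet_equiv (k : ℕ) (L : Type) [Fintype L]
    (v : Fin k → ℝ) (hv : ∀ i, v i ≠ 0)
    (path : L → Finset (Fin k)) (ε : L → Fin k → ℝ)
    (hε : ∀ ℓ i, ε ℓ i = 1 ∨ ε ℓ i = -1)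
    (val : L → ℝ)
    (hval : ∀ ℓ, val ℓ = (∑ i ∈ (path ℓ)ᶜ, (ReLU (v i) + ReLU (-v i)))
      + ∑ i ∈ path ℓ, ReLU (ε ℓ i * v i))
    (ℓs : L) (hstar : ∀ i ∈ path ℓs, 0 < ε ℓs i * v i)
    (huniq : ∀ ℓ, ℓ ≠ ℓs → ¬ (∀ i ∈ path ℓ, 0 < ε ℓ i * v i)) :
    ∀ ℓ, ℓ ≠ ℓs → val ℓ < val ℓs := by
  have habs : ∀ ℓ i, |ε ℓ i| = 1 := fun ℓ i => (abs_eq zero_le_one).mpr (hε ℓ i)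
  intro ℓ hℓ
  obtain ⟨j, hj, hdis⟩ : ∃ j ∈ path ℓ, ε ℓ j * v j ≤ 0 := by simpa using huniq ℓ hℓ
  calc val ℓ = leafValue v (path ℓ) (ε ℓ) := hval ℓ
    _ < ∑ i, |v i| :=
      leafValue_lt_sum_abs_of_disagree (fun i _ => (habs ℓ i).le) hj (hv j) hdis
    _ = leafValue v (path ℓs) (ε ℓs) :=
      (leafValue_eq_sum_abs_of_agree (fun i _ => habs ℓs i) hstar).symm
    _ = val ℓs := (hval ℓs).symm
end

section
/- More generally, val(ℓ⋆) − val(ℓ) = ∑_{i ∈ V(ℓ)} |v i| for any leaf ℓ, where V(ℓ) = {i ∈ path(ℓ) : ε_ℓ(i)·v i < 0} is the set of violated decisions on ℓ's path. -/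
open Finset in
/-- For any leaf `ℓ`, `val ℓ⋆ - val ℓ = ∑_{i ∈ V(ℓ)} |v i|`, where `V(ℓ)` is
the set of violated decisions on `ℓ`'s path and `ℓ⋆` is the leaf with no
violated decisions. -/
theorem violation_gap (k : ℕ) (L : Type) [Fintype L]
    (v : Fin k → ℝ) (hv : ∀ i, v i ≠ 0)
    (path : L → Finset (Fin k)) (ε : L → Fin k → ℝ)
    (hε : ∀ ℓ i, ε ℓ i = 1 ∨ ε ℓ i = -1)
    (val : L → ℝ)
    (hval : ∀ ℓ, val ℓ = (∑ i ∈ (path ℓ)ᶜ, |v i|)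
      + ∑ i ∈ path ℓ, ReLU (ε ℓ i * v i))
    (ℓs : L) (hstar : ∀ i ∈ path ℓs, 0 < ε ℓs i * v i) :
    ∀ ℓ, val ℓs - val ℓ = ∑ i ∈ (path ℓ).filter (fun i => ε ℓ i * v i < 0), |v i| := by
  have key : ∀ m : L, val m = (∑ i, |v i|)
      - ∑ i ∈ (path m).filter (fun i => ε m i * v i < 0), |v i| := by
    intro m
    rw [hval m]
    have h1 : ∀ i ∈ path m,
        ReLU (ε m i * v i) = if ε m i * v i < 0 then 0 else |v i| := by
      intro i _
      have habs : |ε m i * v i| = |v i| := by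
        rcases hε m i with h | h <;> simp [h, abs_mul]
      have hne : ε m i * v i ≠ 0 := by
        rcases hε m i with h | h <;> simp [h, hv i]
      by_cases hc : ε m i * v i < 0
      · simp [ReLU, hc, le_of_lt hc]
      · have hpos : 0 < ε m i * v i := lt_of_le_of_ne (not_lt.mp hc) (Ne.symm hne)
        rw [if_neg hc, ← habs, abs_of_pos hpos]
        simp [ReLU, le_of_lt hpos]
    rw [Finset.sum_congr rfl h1, Finset.sum_ite, Finset.sum_const_zero, zero_add]
    have h2 : (∑ i ∈ path m, |v i|) =
        (∑ i ∈ (path m).filter (fun i => ε m i * v i < 0), |v i|)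
        + ∑ i ∈ (path m).filter (fun i => ¬ ε m i * v i < 0), |v i| :=
      (Finset.sum_filter_add_sum_filter_not _ _ _).symm
    have h3 : (∑ i ∈ (path m)ᶜ, |v i|) + ∑ i ∈ path m, |v i| = ∑ i, |v i| := by
      rw [add_comm]; exact Finset.sum_add_sum_compl _ _
    linarith
  intro ℓ
  have hempty : (path ℓs).filter (fun i => ε ℓs i * v i < 0) = ∅ := by
    apply Finset.filter_false_of_mem
    intro i hi
    exact not_lt.mpr (le_of_lt (hstar i hi))
  rw [key ℓ, key ℓs, hempty]
  simp
end
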